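/- Let t ≥ 1 be an odd integer, ε a real number, L ≥ 1 an integer, and set c = exp(−ε·t) and b = exp(−ε·(t−1)). Consider spins taking values in Fin(2t) (the first t values are ladder/time-parallel pairings, the last t are twisted/time-reversed pairings), with bond weight B(a,a′) = 1 if a = a′, B(a,a′) = c if a ≠ a′ and a, a′ lie in the same block of t values, and B(a,a′) = b if a and a′ lie in different blocks. Then the open-boundary generalized Potts partition function satisfies ∑_{s : Fin L → Fin(2t)} ∏_{i=1}^{L−1} B(s_i, s_{i+1}) = 2t · (1 + t·e^{−ε(t−1)} + (t−1)·e^{−ε t})^{L−1}. -/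

import Mathlib

open BigOperators

/-- Bond Boltzmann weight of the generalized `2t`-state Potts model emerging from
the Floquet-TRS random phase model at odd time `t`: the first `t` states (ladder /
time-parallel pairings) and the last `t` states (twisted / time-reversed pairings)
form two blocks; equal states have weight `1`, distinct states in the same block have
weight `c = e^{−εt}` (type-I domain wall), and states in different blocks have weight
`b = e^{−ε(t−1)}` (type-II domain wall, odd `t`). -/
noncomputable def gPottsWeightOdd (t : ℕ) (ε : ℝ) (a a' : Fin (2 * t)) : ℝ :=
  if a = a' then 1
  else if ((a : ℕ) < t ↔ (a' : ℕ) < t) then Real.exp (-ε * t)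
  else Real.exp (-ε * ((t : ℝ) - 1))

/-- Transfer-matrix lemma: if all column sums of the bond weight equal `K`, the
open-chain partition function on `n+1` sites equals `|α| ⬝ K^n`. -/
lemma gpotts_transfer_aux {α : Type*} [Fintype α] (w : α → α → ℝ) (K : ℝ)
    (hK : ∀ a', ∑ a, w a a' = K) :
    ∀ n : ℕ, (∑ s : Fin (n+1) → α, ∏ i : Fin n, w (s i.castSucc) (s i.succ))
      = (Fintype.card α : ℝ) * K ^ n := by
  intro n
  induction n with
  | zero => simp
  | succ n ih =>
    rw [← (Fin.consEquiv (fun _ : Fin (n+2) => α)).sum_comp]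
    simp only [Fin.consEquiv, Equiv.coe_fn_mk]
    rw [Fintype.sum_prod_type]
    have key : ∀ (x : α) (g : Fin (n+1) → α),
        (∏ i : Fin (n+1), w ((Fin.cons x g : Fin (n+2) → α) i.castSucc)
            ((Fin.cons x g : Fin (n+2) → α) i.succ))
        = w x (g 0) * ∏ i : Fin n, w (g i.castSucc) (g i.succ) := by
      intro x g
      rw [Fin.prod_univ_succ]
      simp [← Fin.succ_castSucc]
    calc (∑ x : α, ∑ g : Fin (n+1) → α,
          ∏ i : Fin (n+1), w ((Fin.cons x g : Fin (n+2) → α) i.castSucc)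
            ((Fin.cons x g : Fin (n+2) → α) i.succ))
        = ∑ g : Fin (n+1) → α, ∑ x : α, w x (g 0) * ∏ i : Fin n, w (g i.castSucc) (g i.succ) := by
          rw [Finset.sum_comm]
          exact Finset.sum_congr rfl fun g _ => Finset.sum_congr rfl fun x _ => key x g
      _ = ∑ g : Fin (n+1) → α, K * ∏ i : Fin n, w (g i.castSucc) (g i.succ) := by
          refine Finset.sum_congr rfl fun g _ => ?_
          rw [← Finset.sum_mul, hK]
      _ = K * ((Fintype.card α : ℝ) * K ^ n) := by rw [← Finset.mul_sum, ih]
      _ = (Fintype.card α : ℝ) * K ^ (n+1) := by ring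

/-- Counting helper: `t` indices below `t` and `t` indices in `[t, 2t)`. -/
lemma gpotts_range_ite_sum (t : ℕ) (x y : ℝ) :
    (∑ i ∈ Finset.range (2 * t), if i < t then x else y) = t * x + t * y := by
  rw [Finset.range_eq_Ico, ← Finset.sum_Ico_consecutive _ (Nat.zero_le t) (by omega : t ≤ 2 * t)]
  have h1 : (∑ i ∈ Finset.Ico 0 t, if i < t then x else y) = ∑ _i ∈ Finset.Ico 0 t, x :=
    Finset.sum_congr rfl fun i hi => by
      simp only [Finset.mem_Ico] at hi; rw [if_pos hi.2]
  have h2 : (∑ i ∈ Finset.Ico t (2 * t), if i < t then x else y)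
      = ∑ _i ∈ Finset.Ico t (2 * t), y :=
    Finset.sum_congr rfl fun i hi => by
      simp only [Finset.mem_Ico] at hi; rw [if_neg (by omega)]
  rw [h1, h2, Finset.sum_const, Finset.sum_const, Nat.card_Ico, Nat.card_Ico]
  have h3 : 2 * t - t = t := by omega
  have h4 : t - 0 = t := by omega
  rw [h3, h4, nsmul_eq_mul, nsmul_eq_mul]

/-- Column sums of the generalized Potts weight: `1 + t·b + (t−1)·c`. -/
lemma gpotts_colsum (t : ℕ) (ε : ℝ) (a' : Fin (2 * t)) :
    (∑ a : Fin (2 * t), gPottsWeightOdd t ε a a')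
      = 1 + (t : ℝ) * Real.exp (-ε * ((t : ℝ) - 1)) + ((t : ℝ) - 1) * Real.exp (-ε * t) := by
  set c := Real.exp (-ε * t) with hc
  set b := Real.exp (-ε * ((t : ℝ) - 1)) with hb
  have hsplit : ∀ a : Fin (2 * t), gPottsWeightOdd t ε a a'
      = (if a = a' then 1 - c else 0) + (if ((a : ℕ) < t ↔ (a' : ℕ) < t) then c else b) := by
    intro a
    unfold gPottsWeightOdd
    by_cases h : a = a'
    · subst h; simp
    · rw [if_neg h, if_neg h, zero_add]
  rw [Finset.sum_congr rfl fun a _ => hsplit a, Finset.sum_add_distrib]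
  have h1 : (∑ a : Fin (2 * t), if a = a' then 1 - c else 0) = 1 - c := by
    simp [Finset.sum_ite_eq' Finset.univ a' (fun _ => 1 - c)]
  have h2 : (∑ a : Fin (2 * t), if ((a : ℕ) < t ↔ (a' : ℕ) < t) then c else b)
      = t * c + t * b := by
    rw [Fin.sum_univ_eq_sum_range (fun i => if (i < t ↔ (a' : ℕ) < t) then c else b) (2 * t)]
    by_cases h' : (a' : ℕ) < t
    · simp only [h', iff_true]
      exact gpotts_range_ite_sum t c b
    · simp only [h', iff_false]
      have : (∑ i ∈ Finset.range (2 * t), if ¬ i < t then c else b)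
          = ∑ i ∈ Finset.range (2 * t), if i < t then b else c :=
        Finset.sum_congr rfl fun i _ => by rw [ite_not]
      rw [this, gpotts_range_ite_sum]; ring
  rw [h1, h2]; ring

/-- Open-boundary generalized Potts partition function for odd `t`:
`∑_s ∏_{i=1}^{L−1} B(s_i, s_{i+1}) = 2t (1 + t e^{−ε(t−1)} + (t−1) e^{−εt})^{L−1}`. -/
theorem gpotts_partition_floquet_trs_obc (t : ℕ) (ht : 1 ≤ t) (hodd : Odd t)
    (ε : ℝ) (L : ℕ) (hL : 1 ≤ L) :
    (∑ s : Fin L → Fin (2 * t), ∏ i : Fin (L - 1),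
        gPottsWeightOdd t ε
          (s ⟨i.1, by have := i.isLt; omega⟩)
          (s ⟨i.1 + 1, by have := i.isLt; omega⟩))
      = 2 * (t : ℝ) *
          (1 + (t : ℝ) * Real.exp (-ε * ((t : ℝ) - 1))
            + ((t : ℝ) - 1) * Real.exp (-ε * t)) ^ (L - 1) := by
  obtain ⟨n, rfl⟩ : ∃ n, L = n + 1 := ⟨L - 1, by omega⟩
  have key := gpotts_transfer_aux (gPottsWeightOdd t ε)
    (1 + (t : ℝ) * Real.exp (-ε * ((t : ℝ) - 1)) + ((t : ℝ) - 1) * Real.exp (-ε * t))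
    (gpotts_colsum t ε) n
  simp only [Fintype.card_fin] at key
  have hcast : ((2 * t : ℕ) : ℝ) = 2 * (t : ℝ) := by push_cast; ring
  rw [hcast] at key
  exact key
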